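/- For all m ≥ 3, the partial sums r(m) = ∑_{k=0}^{m} P(4k+3) satisfy r(m) = 2·r(m-1) + 3·r(m-2) + r(m-3) + 3. -/
import Mathlib


def padovan : ℕ → ℤ
  | 0 => 1
  | 1 => 1
  | 2 => 1
  | n + 3 => padovan (n + 1) + padovan n

lemma padovan_add_twelve (n : ℕ) :
    padovan (n + 12) = 2 * padovan (n + 8) + 3 * padovan (n + 4) + padovan n := by
  have h : ∀ k, padovan (k + 3) = padovan (k + 1) + padovan k := fun k => rfl
  have e12 := h (n + 9); have e11 := h (n + 8); have e10 := h (n + 7)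
  have e9 := h (n + 6); have e8 := h (n + 5); have e7 := h (n + 4)
  have e6 := h (n + 3); have e5 := h (n + 2); have e4 := h (n + 1)
  have e3 := h n
  simp only [show n + 9 + 3 = n + 12 from rfl, show n + 8 + 3 = n + 11 from rfl,
    show n + 7 + 3 = n + 10 from rfl, show n + 6 + 3 = n + 9 from rfl,
    show n + 5 + 3 = n + 8 from rfl, show n + 4 + 3 = n + 7 from rfl,
    show n + 3 + 3 = n + 6 from rfl, show n + 2 + 3 = n + 5 from rfl,
    show n + 1 + 3 = n + 4 from rfl, show n + 9 + 1 = n + 10 from rfl,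
    show n + 8 + 1 = n + 9 from rfl, show n + 7 + 1 = n + 8 from rfl,
    show n + 6 + 1 = n + 7 from rfl, show n + 5 + 1 = n + 6 from rfl,
    show n + 4 + 1 = n + 5 from rfl, show n + 3 + 1 = n + 4 from rfl,
    show n + 2 + 1 = n + 3 from rfl, show n + 1 + 1 = n + 2 from rfl] at *
  linarith

theorem padovan_col_sum_4_3 (m : ℕ) (hm : 3 ≤ m) :
    (∑ k ∈ Finset.range (m + 1), padovan (4 * k + 3))
      = 2 * (∑ k ∈ Finset.range m, padovan (4 * k + 3))
        + 3 * (∑ k ∈ Finset.range (m - 1), padovan (4 * k + 3))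
        + (∑ k ∈ Finset.range (m - 2), padovan (4 * k + 3)) + 3 := by
  induction m, hm using Nat.le_induction with
  | base => simp [Finset.sum_range_succ, padovan]
  | succ n hn ih =>
    have h1 : n + 1 - 1 = n := by omega
    have h2 : n + 1 - 2 = n - 1 := by omega
    have h3 : n - 1 + 1 = n := by omega
    have h4 : n - 2 + 1 = n - 1 := by omega
    have s1 : (∑ k ∈ Finset.range (n + 1 + 1), padovan (4 * k + 3))
        = (∑ k ∈ Finset.range (n + 1), padovan (4 * k + 3)) + padovan (4 * (n + 1) + 3) :=
      Finset.sum_range_succ _ _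
    have s2 : (∑ k ∈ Finset.range (n + 1), padovan (4 * k + 3))
        = (∑ k ∈ Finset.range n, padovan (4 * k + 3)) + padovan (4 * n + 3) :=
      Finset.sum_range_succ _ _
    have s3 : (∑ k ∈ Finset.range n, padovan (4 * k + 3))
        = (∑ k ∈ Finset.range (n - 1), padovan (4 * k + 3)) + padovan (4 * (n - 1) + 3) := by
      conv_lhs => rw [← h3]
      rw [Finset.sum_range_succ]
    have s4 : (∑ k ∈ Finset.range (n - 1), padovan (4 * k + 3))
        = (∑ k ∈ Finset.range (n - 2), padovan (4 * k + 3)) + padovan (4 * (n - 2) + 3) := by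
      conv_lhs => rw [← h4]
      rw [Finset.sum_range_succ]
    have hkey := padovan_add_twelve (4 * (n - 2) + 3)
    have e1 : 4 * (n - 2) + 3 + 12 = 4 * (n + 1) + 3 := by omega
    have e2 : 4 * (n - 2) + 3 + 8 = 4 * n + 3 := by omega
    have e3 : 4 * (n - 2) + 3 + 4 = 4 * (n - 1) + 3 := by omega
    rw [e1, e2, e3] at hkey
    rw [h1, h2, s1]
    linarith
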